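/- Let k ≥ 1 be an integer and let G be a finite bipartite graph with bipartition (U, W) such that |U| = |W|. Then G contains a perfect matching if and only if G contains a perfect k-matching. -/

import Mathlib

/-!
A perfect matching with every edge weighted `k` is a perfect `k`-matching. Conversely, let `f` be
a perfect `k`-matching with `k ≥ 1` and `S` a set of vertices. Every edge of positive weight at a
vertex of `S` ends in the neighbourhood `N(S)`, and every vertex carries total weight `k`, so
`k |S| ≤ k |N(S)|`. Thus Hall's condition holds, and Hall's theorem for bipartite graphs gives a
perfect matching.
-/

/-- A perfect `k`-matching of a simple graph `G` is an assignment `f` of weights in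
`{0, 1, ..., k}` to the edges of `G` (non-edges get weight `0`) such that for every vertex `v`,
the sum of the weights of the edges incident with `v` equals `k`. -/
def SimpleGraph.IsPerfectNMatching {V : Type*} (G : SimpleGraph V) (k : ℕ)
    (f : Sym2 V → ℕ) : Prop :=
  (∀ e, f e ≠ 0 → e ∈ G.edgeSet) ∧ (∀ e, f e ≤ k) ∧
    ∀ v : V, ∑ᶠ e ∈ G.incidenceSet v, f e = k

namespace SimpleGraph

variable {V : Type*} {G : SimpleGraph V}

theorem finsum_incidenceSet_eq_sum [Fintype V] {M : Type*} [AddCommMonoid M] {f : Sym2 V → M}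
    (hf : ∀ e, f e ≠ 0 → e ∈ G.edgeSet) (v : V) :
    ∑ᶠ e ∈ G.incidenceSet v, f e = ∑ w, f s(v, w) := by
  have hsupp : G.incidenceSet v ∩ Function.support f =
      Set.range (fun w ↦ s(v, w)) ∩ Function.support f := by
    ext e
    simp only [Set.mem_inter_iff, Function.mem_support, Set.mem_range, incidenceSet,
      Set.mem_ofPred_eq, Sym2.mem_iff_exists, eq_comm (a := e)]
    exact ⟨fun ⟨⟨_, h⟩, hfe⟩ ↦ ⟨h, hfe⟩, fun ⟨h, hfe⟩ ↦ ⟨⟨hf e hfe, h⟩, hfe⟩⟩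
  rw [finsum_mem_inter_support_eq f _ _ hsupp,
    finsum_mem_range fun _ _ h ↦ Sym2.congr_right.mp h, finsum_eq_sum_of_fintype]

theorem Subgraph.IsPerfectMatching.isPerfectNMatching {M : G.Subgraph}
    (hM : M.IsPerfectMatching) (k : ℕ) :
    G.IsPerfectNMatching k (M.edgeSet.indicator fun _ ↦ k) := by
  refine ⟨fun e he ↦ M.edgeSet_subset (Set.mem_of_indicator_ne_zero he),
    fun e ↦ Set.indicator_le_self' (fun _ _ ↦ Nat.zero_le _) e, fun v ↦ ?_⟩
  obtain ⟨w, hvw, hw⟩ := M.isPerfectMatching_iff.mp hM v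
  have hsupp : G.incidenceSet v ∩ Function.support (M.edgeSet.indicator fun _ ↦ k) =
      {s(v, w)} ∩ Function.support (M.edgeSet.indicator fun _ ↦ k) := by
    ext e
    refine and_congr_left fun he ↦ ⟨fun hve ↦ ?_, fun hew ↦ ?_⟩
    · obtain ⟨u, rfl⟩ := Sym2.mem_iff_exists.mp hve.2
      rw [hw u (M.mem_edgeSet.mp (Set.mem_of_indicator_ne_zero he))]
      rfl
    · rw [hew]
      exact (G.mem_incidenceSet v w).mpr (M.adj_sub hvw)
  rw [finsum_mem_inter_support_eq _ _ _ hsupp, finsum_mem_singleton]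
  exact Set.indicator_of_mem (M.mem_edgeSet.mpr hvw) _

namespace IsPerfectNMatching

variable [Fintype V] {k : ℕ} {f : Sym2 V → ℕ}

theorem sum_eq (hf : G.IsPerfectNMatching k f) (v : V) : ∑ w, f s(v, w) = k := by
  rw [← finsum_incidenceSet_eq_sum hf.1, hf.2.2]

theorem card_le_card_of_forall_adj_mem (hf : G.IsPerfectNMatching k f) (hk : 0 < k)
    {s t : Finset V} (hst : ∀ v ∈ s, ∀ w, G.Adj v w → w ∈ t) : s.card ≤ t.card := by
  refine Nat.le_of_mul_le_mul_left ?_ hk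
  calc k * s.card = ∑ v ∈ s, ∑ w, f s(v, w) := by simp [hf.sum_eq, mul_comm]
    _ = ∑ v ∈ s, ∑ w ∈ t, f s(v, w) := by
      refine Finset.sum_congr rfl fun v hv ↦ (Finset.sum_subset (Finset.subset_univ t) ?_).symm
      exact fun w _ hwt ↦ by_contra fun h ↦ hwt (hst v hv w (hf.1 _ h))
    _ = ∑ w ∈ t, ∑ v ∈ s, f s(w, v) := by
      rw [Finset.sum_comm]
      simp only [Sym2.eq_swap]
    _ ≤ ∑ w ∈ t, ∑ v, f s(w, v) :=
      Finset.sum_le_sum fun w _ ↦ Finset.sum_le_univ_sum_of_nonneg fun _ ↦ Nat.zero_le _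
    _ = k * t.card := by simp [hf.sum_eq, mul_comm]

theorem ncard_le_ncard_iUnion_neighborSet (hf : G.IsPerfectNMatching k f) (hk : 0 < k)
    (s : Set V) : s.ncard ≤ (⋃ v ∈ s, G.neighborSet v).ncard := by
  classical
  simp only [Set.ncard_eq_toFinset_card']
  refine hf.card_le_card_of_forall_adj_mem hk fun v hv w hvw ↦ ?_
  simp only [Set.mem_toFinset] at hv ⊢
  exact Set.mem_biUnion hv hvw

end IsPerfectNMatching

end SimpleGraph

theorem bipartite_perfect_matching_iff_perfect_k_matching_general {V : Type*} [Fintype V]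
    (G : SimpleGraph V) (k : ℕ) (hk : 1 ≤ k) (U W : Set V)
    (hdisj : Disjoint U W)
    (hbip : ∀ a b, G.Adj a b → (a ∈ U ∧ b ∈ W) ∨ (a ∈ W ∧ b ∈ U)) :
    (∃ M : G.Subgraph, M.IsPerfectMatching) ↔ (∃ f, G.IsPerfectNMatching k f) := by
  classical
  constructor
  · rintro ⟨M, hM⟩
    exact ⟨_, hM.isPerfectNMatching k⟩
  · rintro ⟨f, hf⟩
    exact SimpleGraph.exists_isPerfectMatching_of_forall_ncard_le ⟨hdisj, hbip⟩
      (hf.ncard_le_ncard_iUnion_neighborSet hk)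

/-- Let `k ≥ 1` be an integer and let `G` be a finite bipartite graph with bipartition `(U, W)`
such that `|U| = |W|`. Then `G` contains a perfect matching if and only if `G` contains a
perfect `k`-matching. -/
theorem bipartite_perfect_matching_iff_perfect_k_matching {V : Type*} [Fintype V]
    (G : SimpleGraph V) (k : ℕ) (hk : 1 ≤ k) (U W : Set V)
    (hdisj : Disjoint U W) (hcover : U ∪ W = Set.univ)
    (hbip : ∀ a b, G.Adj a b → (a ∈ U ∧ b ∈ W) ∨ (a ∈ W ∧ b ∈ U))
    (hcard : U.ncard = W.ncard) :
    (∃ M : G.Subgraph, M.IsPerfectMatching) ↔ (∃ f, G.IsPerfectNMatching k f) :=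
  bipartite_perfect_matching_iff_perfect_k_matching_general G k hk U W hdisj hbip
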